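/- Let f : ℝ^d → ℝ^K be such that f(w) is a probability vector on {1,…,K} for every w and each coordinate f(·)_j is twice continuously differentiable, with ‖∇²f(w)_y‖_op ≤ σ_M for every w for a fixed class y. Let x ∈ ℝ^d with ∇f(x)_y ≠ 0, let ε > 0, and set δ = −ε ∇f(x)_y/‖∇f(x)_y‖₂ and x' = x + δ. Then (1/2)∑_{j=1}^K |f(x)_j − f(x')_j| ≥ (1/2)[ε ‖∇f(x)_y‖₂ − (σ_M/2) ε²]. -/

import Mathlib

/-!
Only the coordinate `y` matters: the total variation sum dominates `|f(x)_y - f(x')_y|`.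
The Hessian bound makes `∇f_y` σM-Lipschitz, so by the descent lemma
`f(x')_y ≤ f(x)_y + ⟪∇f(x)_y, δ⟫ + σM/2 ‖δ‖²`, and for the FGSM step
`⟪∇f(x)_y, δ⟫ = -ε ‖∇f(x)_y‖` and `‖δ‖ ≤ |ε|`.
-/

open Finset

section Taylor

open Set

variable {E F : Type*} [NormedAddCommGroup E] [NormedSpace ℝ E]
  [NormedAddCommGroup F] [NormedSpace ℝ F]

theorem norm_fderiv_sub_fderiv_le_of_norm_iteratedFDeriv_two_le {g : E → F}
    (hg : ContDiff ℝ 2 g) {C : ℝ} (hC : ∀ w, ‖iteratedFDeriv ℝ 2 g w‖ ≤ C) (a b : E) :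
    ‖fderiv ℝ g a - fderiv ℝ g b‖ ≤ C * ‖a - b‖ := by
  have hdiff : Differentiable ℝ (fderiv ℝ g) :=
    (hg.fderiv_right (m := 1) le_rfl).differentiable one_ne_zero
  refine convex_univ.norm_image_sub_le_of_norm_fderiv_le (fun w _ => hdiff w) (fun w _ => ?_)
    (mem_univ b) (mem_univ a)
  rw [← norm_iteratedFDeriv_one, norm_iteratedFDeriv_fderiv]
  exact hC w

theorem norm_image_add_sub_sub_fderiv_le {g : E → F} (hg : Differentiable ℝ g) {L : ℝ}
    (hL : ∀ a b, ‖fderiv ℝ g a - fderiv ℝ g b‖ ≤ L * ‖a - b‖) (x δ : E) :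
    ‖g (x + δ) - g x - fderiv ℝ g x δ‖ ≤ L / 2 * ‖δ‖ ^ 2 := by
  set φ : ℝ → F := fun t => g (x + t • δ) - g x - t • fderiv ℝ g x δ
  have hφ : ∀ t, HasDerivAt φ (fderiv ℝ g (x + t • δ) δ - fderiv ℝ g x δ) t := by
    intro t
    have hline : HasDerivAt (fun s : ℝ => x + s • δ) δ t := by
      simpa using ((hasDerivAt_id t).smul_const δ).const_add x
    have hlin : HasDerivAt (fun s : ℝ => s • fderiv ℝ g x δ) (fderiv ℝ g x δ) t := by
      simpa using (hasDerivAt_id t).smul_const (fderiv ℝ g x δ)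
    exact (((hg _).hasFDerivAt.comp_hasDerivAt t hline).sub_const (g x)).sub hlin
  have hB : ∀ t, HasDerivAt (fun s : ℝ => L / 2 * ‖δ‖ ^ 2 * s ^ 2) (L * ‖δ‖ ^ 2 * t) t :=
    fun t => ((hasDerivAt_pow 2 t).const_mul (L / 2 * ‖δ‖ ^ 2)).congr_deriv (by ring)
  have hbound : ∀ t ∈ Ico (0 : ℝ) 1,
      ‖fderiv ℝ g (x + t • δ) δ - fderiv ℝ g x δ‖ ≤ L * ‖δ‖ ^ 2 * t := fun t ht =>
    calc ‖fderiv ℝ g (x + t • δ) δ - fderiv ℝ g x δ‖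
        = ‖(fderiv ℝ g (x + t • δ) - fderiv ℝ g x) δ‖ := rfl
      _ ≤ ‖fderiv ℝ g (x + t • δ) - fderiv ℝ g x‖ * ‖δ‖ := ContinuousLinearMap.le_opNorm _ _
      _ ≤ L * ‖t • δ‖ * ‖δ‖ := by
          gcongr
          simpa using hL (x + t • δ) x
      _ = L * ‖δ‖ ^ 2 * t := by
          rw [norm_smul, Real.norm_of_nonneg ht.1]
          ring
  have := image_norm_le_of_norm_deriv_right_le_deriv_boundary
    (fun t _ => (hφ t).continuousAt.continuousWithinAt) (fun t _ => (hφ t).hasDerivWithinAt)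
    (by simp [φ]) hB hbound (right_mem_Icc.2 zero_le_one)
  simpa [φ] using this

theorem norm_image_add_sub_sub_fderiv_le_of_norm_iteratedFDeriv_two_le {g : E → F}
    (hg : ContDiff ℝ 2 g) {C : ℝ} (hC : ∀ w, ‖iteratedFDeriv ℝ 2 g w‖ ≤ C) (x δ : E) :
    ‖g (x + δ) - g x - fderiv ℝ g x δ‖ ≤ C / 2 * ‖δ‖ ^ 2 :=
  norm_image_add_sub_sub_fderiv_le (hg.differentiable two_ne_zero)
    (norm_fderiv_sub_fderiv_le_of_norm_iteratedFDeriv_two_le hg hC) x δ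

end Taylor

theorem norm_neg_div_norm_smul_le_abs {E : Type*} [NormedAddCommGroup E] [NormedSpace ℝ E]
    (ε : ℝ) (v : E) : ‖(-(ε / ‖v‖)) • v‖ ≤ |ε| := by
  rcases eq_or_ne v 0 with rfl | hv
  · simp
  · rw [norm_smul, norm_neg, norm_div, norm_norm, div_mul_cancel₀ _ (norm_ne_zero_iff.2 hv),
      Real.norm_eq_abs]

theorem fderiv_apply_neg_div_norm_smul_gradient {E : Type*} [NormedAddCommGroup E]
    [InnerProductSpace ℝ E] [CompleteSpace E] (g : E → ℝ) (x : E) (ε : ℝ) :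
    fderiv ℝ g x (-(ε / ‖gradient g x‖) • gradient g x) = -(ε * ‖gradient g x‖) := by
  rw [← inner_gradient_left, real_inner_smul_right, real_inner_self_eq_norm_sq]
  rcases eq_or_ne ‖gradient g x‖ 0 with h | h
  · simp [h]
  · field_simp

theorem distribution_mismatch_l2_general {d K : ℕ}
    (f : EuclideanSpace ℝ (Fin d) → Fin K → ℝ)
    (hsmooth : ∀ j : Fin K, ContDiff ℝ 2 fun w => f w j)
    (y : Fin K) (σM : ℝ)
    (hHess : ∀ w, ‖iteratedFDeriv ℝ 2 (fun u => f u y) w‖ ≤ σM)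
    (x : EuclideanSpace ℝ (Fin d))
    (ε : ℝ) :
    (1 / 2) * (ε * ‖gradient (fun w => f w y) x‖ - σM / 2 * ε ^ 2) ≤
      (1 / 2) * ∑ j : Fin K,
        |f x j -
          f (x + (-(ε / ‖gradient (fun w => f w y) x‖)) •
            gradient (fun w => f w y) x) j| := by
  set G := gradient (fun w => f w y) x
  set δ := (-(ε / ‖G‖)) • G
  have hσM : 0 ≤ σM := (norm_nonneg _).trans (hHess x)
  have htaylor :=
    norm_image_add_sub_sub_fderiv_le_of_norm_iteratedFDeriv_two_le (hsmooth y) hHess x δ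
  have hstep : fderiv ℝ (fun w => f w y) x δ = -(ε * ‖G‖) :=
    fderiv_apply_neg_div_norm_smul_gradient _ x ε
  rw [hstep] at htaylor
  have hδ : ‖δ‖ ^ 2 ≤ ε ^ 2 := by
    simpa using pow_le_pow_left₀ (norm_nonneg δ) (norm_neg_div_norm_smul_le_abs ε G) 2
  have hy : ε * ‖G‖ - σM / 2 * ε ^ 2 ≤ |f x y - f (x + δ) y| := by
    have hlow := (abs_le.mp htaylor).2
    have hquad : σM / 2 * ‖δ‖ ^ 2 ≤ σM / 2 * ε ^ 2 := by gcongr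
    linarith [le_abs_self (f x y - f (x + δ) y)]
  gcongr
  exact hy.trans (single_le_sum (fun j _ => abs_nonneg (f x j - f (x + δ) j)) (mem_univ y))

/-- ℓ2 distribution-mismatch bound: the total variation distance between the label
distributions at `x` and its ℓ2 FGSM adversarial example `x' = x - ε ∇f(x)_y/‖∇f(x)_y‖₂`
is at least `(1/2)[ε ‖∇f(x)_y‖₂ - (σM/2) ε²]`. -/
theorem distribution_mismatch_l2 {d K : ℕ}
    (f : EuclideanSpace ℝ (Fin d) → Fin K → ℝ)
    (hprob : ∀ w, (∀ j, 0 ≤ f w j) ∧ ∑ j : Fin K, f w j = 1)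
    (hsmooth : ∀ j : Fin K, ContDiff ℝ 2 fun w => f w j)
    (y : Fin K) (σM : ℝ)
    (hHess : ∀ w, ‖iteratedFDeriv ℝ 2 (fun u => f u y) w‖ ≤ σM)
    (x : EuclideanSpace ℝ (Fin d))
    (hgrad : gradient (fun w => f w y) x ≠ 0)
    (ε : ℝ) (hε : 0 < ε) :
    (1 / 2) * (ε * ‖gradient (fun w => f w y) x‖ - σM / 2 * ε ^ 2) ≤
      (1 / 2) * ∑ j : Fin K,
        |f x j -
          f (x + (-(ε / ‖gradient (fun w => f w y) x‖)) •
            gradient (fun w => f w y) x) j| :=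
  distribution_mismatch_l2_general f hsmooth y σM hHess x ε
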